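/- Fourier inversion formula: for a finite group G and f : G → ℂ, where Ĝ denotes the irreducible unitary matrix representations ρ of G with degrees d_ρ, one has f(s) = ∑_{ρ∈Ĝ} (d_ρ/|G|) ∑_{g∈G} f(g) tr(ρ(s) ρ(g)⁻¹) for every s ∈ G. -/

import Mathlib

open Matrix

/-- Schur commutant criterion for irreducibility of a complex matrix representation. -/
def IsIrredMatRep {G : Type*} [Group G] {n : ℕ} (ρ : G →* Matrix (Fin n) (Fin n) ℂ) : Prop :=
  0 < n ∧ ∀ M : Matrix (Fin n) (Fin n) ℂ, (∀ g, M * ρ g = ρ g * M) →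
    ∃ c : ℂ, M = c • (1 : Matrix (Fin n) (Fin n) ℂ)

section lemmas
variable {G : Type*} [Group G] [Fintype G]

lemma triple_entry {n m : ℕ} (A : Matrix (Fin n) (Fin n) ℂ) (B : Matrix (Fin m) (Fin m) ℂ)
    (e c : Fin n) (a b : Fin m) :
    (A * single e a (1:ℂ) * B) c b = A c e * B a b := by
  simp [mul_apply, single, Finset.sum_ite_eq, ite_and, mul_comm]

/-- averaging gives an intertwiner -/
lemma avg_intertwines {n m : ℕ} (ρ : G →* Matrix (Fin n) (Fin n) ℂ)
    (τ : G →* Matrix (Fin m) (Fin m) ℂ) (E : Matrix (Fin n) (Fin m) ℂ) (h : G) :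
    ρ h * (∑ g : G, ρ g * E * τ g⁻¹) = (∑ g : G, ρ g * E * τ g⁻¹) * τ h := by
  rw [Matrix.mul_sum, Matrix.sum_mul]
  refine Fintype.sum_equiv (Equiv.mulLeft h) _ _ (fun g => ?_)
  simp only [Equiv.coe_mulLeft]
  have hτ : τ g⁻¹ = τ (h*g)⁻¹ * τ h := by
    rw [← _root_.map_mul]; congr 1; group
  rw [← Matrix.mul_assoc, ← Matrix.mul_assoc, ← _root_.map_mul, hτ, Matrix.mul_assoc, Matrix.mul_assoc, Matrix.mul_assoc]

lemma schur_cross {n m : ℕ} (ρ : G →* Matrix (Fin n) (Fin n) ℂ)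
    (τ : G →* Matrix (Fin m) (Fin m) ℂ)
    (hcross : ∀ U : Matrix (Fin n) (Fin m) ℂ, (∀ g, ρ g * U = U * τ g) → U = 0)
    (E : Matrix (Fin n) (Fin m) ℂ) :
    ∑ g : G, ρ g * E * τ g⁻¹ = 0 :=
  hcross _ (fun h => avg_intertwines ρ τ E h)

lemma schur_same {n : ℕ} (ρ : G →* Matrix (Fin n) (Fin n) ℂ) (hρ : IsIrredMatRep ρ)
    (E : Matrix (Fin n) (Fin n) ℂ) :
    ∑ g : G, ρ g * E * ρ g⁻¹ = ((Fintype.card G : ℂ) * E.trace / n) • 1 := by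
  obtain ⟨c, hc⟩ := hρ.2 (∑ g : G, ρ g * E * ρ g⁻¹) (fun h => (avg_intertwines ρ ρ E h).symm)
  have htr : (∑ g : G, ρ g * E * ρ g⁻¹).trace = (Fintype.card G : ℂ) * E.trace := by
    rw [trace_sum]
    have key : ∀ g : G, (ρ g * E * ρ g⁻¹).trace = E.trace := fun g => by
      rw [trace_mul_comm, ← Matrix.mul_assoc, ← _root_.map_mul, inv_mul_cancel, _root_.map_one,
        Matrix.one_mul]
    simp [key, Finset.sum_const, nsmul_eq_mul]
  have h2 : (∑ g : G, ρ g * E * ρ g⁻¹).trace = c * n := by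
    rw [hc, trace_smul, trace_one]
    simp [mul_comm]
  rw [hc]
  congr 1
  have hn : (n : ℂ) ≠ 0 := Nat.cast_ne_zero.mpr hρ.1.ne'
  rw [eq_div_iff hn, ← htr, h2]

lemma schur_entry_cross {n m : ℕ} (ρ : G →* Matrix (Fin n) (Fin n) ℂ)
    (τ : G →* Matrix (Fin m) (Fin m) ℂ)
    (hcross : ∀ U : Matrix (Fin n) (Fin m) ℂ, (∀ g, ρ g * U = U * τ g) → U = 0)
    (c e : Fin n) (a b : Fin m) :
    ∑ g : G, ρ g c e * τ g⁻¹ a b = 0 := by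
  have := congrFun (congrFun (schur_cross ρ τ hcross (single e a 1)) c) b
  rw [Matrix.sum_apply] at this
  simpa [triple_entry] using this

lemma schur_entry_same {n : ℕ} (ρ : G →* Matrix (Fin n) (Fin n) ℂ) (hρ : IsIrredMatRep ρ)
    (c e a b : Fin n) :
    ∑ g : G, ρ g c e * ρ g⁻¹ a b =
      if e = a ∧ c = b then (Fintype.card G : ℂ) / n else 0 := by
  have := congrFun (congrFun (schur_same ρ hρ (single e a 1)) c) b
  rw [Matrix.sum_apply] at this
  simp only [triple_entry] at this
  rw [this]
  have htr : (single e a (1:ℂ)).trace = if e = a then 1 else 0 := by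
    rcases eq_or_ne e a with rfl | h
    · simp [trace_single_eq_same]
    · simp [trace_single_eq_of_ne e a (1:ℂ) h, h]
  rw [htr, Matrix.smul_apply, Matrix.one_apply]
  by_cases h1 : e = a <;> by_cases h2 : c = b <;>
    simp [h1, h2, mul_div_assoc, div_mul_eq_mul_div, smul_eq_mul]

lemma trace_smul_entry {n m : ℕ} (ρ : G →* Matrix (Fin n) (Fin n) ℂ)
    (τ : G →* Matrix (Fin m) (Fin m) ℂ) (C : Matrix (Fin n) (Fin n) ℂ) (a b : Fin m) :
    ∑ g : G, ((ρ g * C).trace • τ g⁻¹) a b =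
      ∑ c, ∑ e, C e c * ∑ g : G, ρ g c e * τ g⁻¹ a b := by
  have step : ∀ g : G, ((ρ g * C).trace • τ g⁻¹) a b =
      ∑ c, ∑ e, C e c * (ρ g c e * τ g⁻¹ a b) := by
    intro g
    rw [Matrix.smul_apply, smul_eq_mul, Matrix.trace]
    simp only [diag, mul_apply, Finset.sum_mul]
    refine Finset.sum_congr rfl fun c _ => Finset.sum_congr rfl fun e _ => by ring
  rw [Finset.sum_congr rfl fun g _ => step g, Finset.sum_comm]
  refine Finset.sum_congr rfl fun c _ => ?_
  rw [Finset.sum_comm]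
  refine Finset.sum_congr rfl fun e _ => ?_
  rw [Finset.mul_sum]

lemma trace_sum_same {n : ℕ} (ρ : G →* Matrix (Fin n) (Fin n) ℂ) (hρ : IsIrredMatRep ρ)
    (C : Matrix (Fin n) (Fin n) ℂ) :
    ∑ g : G, (ρ g * C).trace • ρ g⁻¹ = ((Fintype.card G : ℂ) / n) • C := by
  ext a b
  rw [Matrix.sum_apply, trace_smul_entry]
  simp only [schur_entry_same ρ hρ]
  simp [ite_and, mul_ite, Finset.sum_ite_eq, Finset.sum_ite_eq', Matrix.smul_apply, smul_eq_mul,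
    mul_comm]

lemma trace_sum_cross {n m : ℕ} (ρ : G →* Matrix (Fin n) (Fin n) ℂ)
    (τ : G →* Matrix (Fin m) (Fin m) ℂ)
    (hcross : ∀ U : Matrix (Fin n) (Fin m) ℂ, (∀ g, ρ g * U = U * τ g) → U = 0)
    (C : Matrix (Fin n) (Fin n) ℂ) :
    ∑ g : G, (ρ g * C).trace • τ g⁻¹ = 0 := by
  ext a b
  rw [Matrix.sum_apply, trace_smul_entry]
  simp [schur_entry_cross ρ τ hcross]

variable {ι : Type*} [Fintype ι]

/-- the Fourier transform, as a linear map -/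
noncomputable def hatL (d : ι → ℕ) (ρ : ∀ i, G →* Matrix (Fin (d i)) (Fin (d i)) ℂ) (i : ι) :
    (G → ℂ) →ₗ[ℂ] Matrix (Fin (d i)) (Fin (d i)) ℂ :=
  ∑ g : G, (LinearMap.proj g).smulRight (ρ i g⁻¹)

lemma hatL_apply (d : ι → ℕ) (ρ : ∀ i, G →* Matrix (Fin (d i)) (Fin (d i)) ℂ) (i : ι)
    (f : G → ℂ) : hatL d ρ i f = ∑ g : G, f g • ρ i g⁻¹ := by
  simp [hatL]

/-- right translation as a linear map -/
noncomputable def Rtrans (g : G) : (G → ℂ) →ₗ[ℂ] (G → ℂ) :=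
  LinearMap.funLeft ℂ ℂ (fun x => x * g)

lemma Trans_apply (g : G) (f : G → ℂ) (x : G) : Rtrans g f x = f (x * g) := rfl

lemma completeness (d : ι → ℕ) (ρ : ∀ i, G →* Matrix (Fin (d i)) (Fin (d i)) ℂ)
    (hcomplete : ∀ (m : ℕ) (σ : G →* Matrix (Fin m) (Fin m) ℂ), IsIrredMatRep σ →
      ∃ i, ∃ U : Matrix (Fin (d i)) (Fin m) ℂ, U ≠ 0 ∧ ∀ g, ρ i g * U = U * σ g)
    (f : G → ℂ) (hf : ∀ i, ∑ g : G, f g • ρ i g⁻¹ = 0) : f = 0 := by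
  classical
  by_contra hf0
  -- the common kernel of the Fourier transforms
  set K : Submodule ℂ (G → ℂ) := ⨅ i, LinearMap.ker (hatL d ρ i) with hK
  have hmemK : ∀ h : G → ℂ, h ∈ K ↔ ∀ i, ∑ g : G, h g • ρ i g⁻¹ = 0 := by
    intro h
    simp [hK, Submodule.mem_iInf, LinearMap.mem_ker, hatL_apply]
  have hfK : f ∈ K := (hmemK f).mpr hf
  -- K is invariant under right translation
  have hKinv : ∀ g : G, ∀ v ∈ K, Rtrans g v ∈ K := by
    intro g v hv
    rw [hmemK] at hv ⊢
    intro i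
    have : ∀ x : G, Rtrans g v x • ρ i x⁻¹ = ρ i g * (v (x * g) • ρ i (x * g)⁻¹) := by
      intro x
      rw [Trans_apply, Matrix.mul_smul]
      congr 1
      rw [← _root_.map_mul]
      congr 1
      group
    rw [Finset.sum_congr rfl fun x _ => this x, ← Matrix.mul_sum]
    rw [show (∑ x : G, v (x * g) • ρ i (x * g)⁻¹) = ∑ y : G, v y • ρ i y⁻¹ from
      Fintype.sum_equiv (Equiv.mulRight g) _ _ (fun x => rfl), hv i]
    simp
  -- the set of nonzero invariant submodules of K
  set S : Set (Submodule ℂ (G → ℂ)) :=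
    {W | W ≠ ⊥ ∧ W ≤ K ∧ ∀ g : G, ∀ v ∈ W, Rtrans g v ∈ W} with hS
  have hKS : K ∈ S := by
    refine ⟨fun hc => hf0 ?_, le_refl K, hKinv⟩
    rw [hc] at hfK
    simpa using hfK
  -- choose a minimal one
  have hne : {n : ℕ | ∃ W ∈ S, Module.finrank ℂ W = n}.Nonempty :=
    ⟨Module.finrank ℂ K, K, hKS, rfl⟩
  obtain ⟨W, hWS, hWrank⟩ := Nat.sInf_mem hne
  have hmin : ∀ W' ∈ S, Module.finrank ℂ W ≤ Module.finrank ℂ W' := by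
    intro W' hW'
    rw [hWrank]
    exact Nat.sInf_le ⟨W', hW', rfl⟩
  obtain ⟨hWbot, hWK, hWinv⟩ := hWS
  have hmpos : 0 < Module.finrank ℂ W := by
    rw [Module.finrank_pos_iff]
    exact Submodule.nontrivial_iff_ne_bot.mpr hWbot
  set m : ℕ := Module.finrank ℂ W with hm
  set b : Module.Basis (Fin m) ℂ W := Module.finBasis ℂ W with hb
  -- the restricted representation
  set Tres : G → (W →ₗ[ℂ] W) := fun g => (Rtrans g).restrict (hWinv g) with hTres
  have hTres_coe : ∀ (g : G) (w : W), ((Tres g w : W) : G → ℂ) = fun x => (w : G → ℂ) (x * g) :=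
    fun g w => rfl
  have hTres_comp : ∀ g h : G, Tres (g * h) = (Tres g).comp (Tres h) := by
    intro g h
    ext w x
    rw [LinearMap.comp_apply, hTres_coe, hTres_coe, hTres_coe]
    simp only []
    rw [mul_assoc]
  have hTres_one : Tres 1 = LinearMap.id := by
    ext w x
    rw [hTres_coe]
    simp only [mul_one, LinearMap.id_coe, id_eq]
  -- the matrix representation on W
  set σ : G →* Matrix (Fin m) (Fin m) ℂ :=
    { toFun := fun g => LinearMap.toMatrix b b (Tres g)
      map_one' := by
        show LinearMap.toMatrix b b (Tres 1) = 1
        rw [hTres_one, LinearMap.toMatrix_id]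
      map_mul' := fun g h => by
        show LinearMap.toMatrix b b (Tres (g * h)) =
          LinearMap.toMatrix b b (Tres g) * LinearMap.toMatrix b b (Tres h)
        rw [hTres_comp g h, LinearMap.toMatrix_comp b b b] } with hσdef
  have hσ_apply : ∀ g, σ g = LinearMap.toMatrix b b (Tres g) := fun g => rfl
  -- σ is irreducible
  have hσirr : IsIrredMatRep σ := by
    refine ⟨hmpos, fun M hM => ?_⟩
    set φ : W →ₗ[ℂ] W := Matrix.toLin b b M with hφ
    have hφcomm : ∀ g : G, φ.comp (Tres g) = (Tres g).comp φ := by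
      intro g
      apply (LinearMap.toMatrix b b).injective
      rw [LinearMap.toMatrix_comp b b b, LinearMap.toMatrix_comp b b b,
        LinearMap.toMatrix_toLin, ← hσ_apply, hM g]
    have : Nontrivial W := Module.nontrivial_of_finrank_pos hmpos
    obtain ⟨μ, hμ⟩ := Module.End.exists_eigenvalue φ
    have hE : (Module.End.eigenspace φ μ) ≠ ⊥ := hμ
    set E' : Submodule ℂ (G → ℂ) := (Module.End.eigenspace φ μ).map W.subtype with hE'
    have hE'S : E' ∈ S := by
      refine ⟨?_, le_trans (Submodule.map_subtype_le W _) hWK, ?_⟩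
      · obtain ⟨x, hxE, hx0⟩ := (Submodule.ne_bot_iff _).mp hE
        exact (Submodule.ne_bot_iff E').mpr
          ⟨(x : G → ℂ), Submodule.mem_map_of_mem hxE, fun hc => hx0 (Subtype.ext hc)⟩
      · rintro g v ⟨x, hxE, rfl⟩
        refine ⟨Tres g x, ?_, rfl⟩
        have hx' := Module.End.mem_eigenspace_iff.mp hxE
        refine Module.End.mem_eigenspace_iff.mpr ?_
        rw [← LinearMap.comp_apply, hφcomm g, LinearMap.comp_apply, hx', _root_.map_smul]
    have hE'W : E' = W := Submodule.eq_of_le_of_finrank_le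
      (Submodule.map_subtype_le W _) (hmin E' hE'S)
    have hall : ∀ w : W, φ w = μ • w := by
      intro w
      have hwE' : (w : G → ℂ) ∈ E' := hE'W.symm ▸ w.2
      obtain ⟨x, hxE, hx⟩ := hwE'
      rw [show w = x from Subtype.ext hx.symm]
      exact Module.End.mem_eigenspace_iff.mp hxE
    refine ⟨μ, ?_⟩
    have hφeq : φ = μ • LinearMap.id := by
      ext w; rw [hall w]; rfl
    calc M = LinearMap.toMatrix b b φ := by rw [hφ, LinearMap.toMatrix_toLin]
    _ = μ • LinearMap.toMatrix b b LinearMap.id := by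
      rw [hφeq]; exact (LinearMap.toMatrix b b).map_smul μ LinearMap.id
    _ = μ • 1 := by rw [LinearMap.toMatrix_id]
  -- apply the completeness hypothesis
  obtain ⟨i, U, hU0, hU⟩ := hcomplete m σ hσirr
  set ε : Fin m → ℂ := fun k => (b k : G → ℂ) 1 with hεdef
  have hval1 : ∀ w : W, (w : G → ℂ) 1 = ∑ k, b.repr w k * ε k := by
    intro w
    conv_lhs => rw [← b.sum_repr w]
    rw [Submodule.coe_sum, Finset.sum_apply]
    refine Finset.sum_congr rfl fun k _ => ?_
    rw [Submodule.coe_smul]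
    rfl
  have hεne : ε ≠ 0 := by
    intro hε0
    apply hWbot
    rw [Submodule.eq_bot_iff]
    intro v hv
    funext x
    have h1 : v x = ((Tres x ⟨v, hv⟩ : W) : G → ℂ) 1 := by
      rw [hTres_coe]; simp only [one_mul]
    rw [h1, hval1]
    simp [hε0]
  -- U kills every coordinate vector
  have hUmv : ∀ x : Fin m → ℂ, U *ᵥ x = 0 := by
    intro x
    set w : W := b.equivFun.symm x with hw
    have hrepr : ∀ k, b.repr w k = x k := by
      intro k
      have h1 : b.equivFun w = x := b.equivFun.apply_symm_apply x
      rw [← h1]; rfl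
    have hvalg : ∀ g : G, (w : G → ℂ) g = (σ g * vecMulVec x ε).trace := by
      intro g
      have h1 : (w : G → ℂ) g = ((Tres g w : W) : G → ℂ) 1 := by
        rw [hTres_coe]; simp only [one_mul]
      rw [h1, hval1 (Tres g w)]
      have h2 : ∀ k, b.repr (Tres g w) k = (σ g *ᵥ x) k := by
        intro k
        rw [← LinearMap.toMatrix_mulVec_repr b b (Tres g) w, ← hσ_apply]
        congr 1
        funext l
        exact hrepr l
      rw [Finset.sum_congr rfl fun k _ => by rw [h2 k]]
      rw [Matrix.trace]
      simp only [diag, mul_apply, vecMulVec_apply, Matrix.mulVec, dotProduct]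
      refine Finset.sum_congr rfl fun k _ => ?_
      rw [Finset.sum_mul]
      exact Finset.sum_congr rfl fun l _ => by ring
    -- the Fourier coefficient of w vanishes
    have hhat : ∑ g : G, (w : G → ℂ) g • ρ i g⁻¹ = 0 := (hmemK _).mp (hWK w.2) i
    have step : U * (∑ g : G, (w : G → ℂ) g • σ g⁻¹) = 0 := by
      rw [Matrix.mul_sum]
      have h3 : ∀ g : G, U * ((w : G → ℂ) g • σ g⁻¹) = (w : G → ℂ) g • (ρ i g⁻¹ * U) := by
        intro g
        rw [Matrix.mul_smul, hU g⁻¹]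
      rw [Finset.sum_congr rfl fun g _ => h3 g]
      calc ∑ g : G, (w : G → ℂ) g • (ρ i g⁻¹ * U)
          = (∑ g : G, (w : G → ℂ) g • ρ i g⁻¹) * U := by
            rw [Matrix.sum_mul]
            exact Finset.sum_congr rfl fun g _ => (Matrix.smul_mul _ _ _).symm
        _ = 0 := by rw [hhat, Matrix.zero_mul]
    have hsum : ∑ g : G, (w : G → ℂ) g • σ g⁻¹ =
        ((Fintype.card G : ℂ) / m) • vecMulVec x ε := by
      rw [Finset.sum_congr rfl fun g _ => by rw [hvalg g]]
      exact trace_sum_same σ hσirr (vecMulVec x ε)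
    rw [hsum, Matrix.mul_smul] at step
    have hc : ((Fintype.card G : ℂ) / m) ≠ 0 :=
      div_ne_zero (Nat.cast_ne_zero.mpr Fintype.card_ne_zero) (Nat.cast_ne_zero.mpr hmpos.ne')
    have hUC : U * vecMulVec x ε = 0 := (smul_eq_zero.mp step).resolve_left hc
    obtain ⟨k0, hk0⟩ := Function.ne_iff.mp hεne
    funext a
    have h4 := congrFun (congrFun hUC a) k0
    rw [mul_apply, Matrix.zero_apply] at h4
    simp only [vecMulVec_apply] at h4
    simp only [Pi.zero_apply]
    have h5 : (∑ l, U a l * x l) * ε k0 = 0 := by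
      rw [← h4, Finset.sum_mul]
      exact Finset.sum_congr rfl fun l _ => by ring
    have h6 := (mul_eq_zero.mp h5).resolve_right hk0
    simpa [Matrix.mulVec, dotProduct] using h6
  apply hU0
  ext a l
  have h7 := congrFun (hUmv (Pi.single l 1)) a
  simp only [Matrix.mulVec, dotProduct, Pi.zero_apply] at h7
  rw [Matrix.zero_apply, ← h7]
  rw [Finset.sum_eq_single l (fun c _ hc => by simp [Pi.single_apply, hc]) (by simp)]
  simp

open scoped Classical in
lemma delta_formula (d : ι → ℕ) (ρ : ∀ i, G →* Matrix (Fin (d i)) (Fin (d i)) ℂ)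
    (hirr : ∀ i, IsIrredMatRep (ρ i))
    (hineq : ∀ i j, i ≠ j → ∀ U : Matrix (Fin (d i)) (Fin (d j)) ℂ,
      (∀ g, ρ i g * U = U * ρ j g) → U = 0)
    (hcomplete : ∀ (m : ℕ) (σ : G →* Matrix (Fin m) (Fin m) ℂ), IsIrredMatRep σ →
      ∃ i, ∃ U : Matrix (Fin (d i)) (Fin m) ℂ, U ≠ 0 ∧ ∀ g, ρ i g * U = U * σ g)
    (t : G) :
    ∑ i, ((d i : ℂ) / (Fintype.card G : ℂ)) * (ρ i t).trace =
      if t = 1 then 1 else 0 := by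
  classical
  set N : ℂ := (Fintype.card G : ℂ) with hN
  set h : G → ℂ :=
    fun g => (if g = 1 then (1:ℂ) else 0) - ∑ i, ((d i : ℂ)/N) * (ρ i g).trace with hh
  have hhat : ∀ j, ∑ g : G, h g • ρ j g⁻¹ = 0 := by
    intro j
    have split : ∀ g : G, h g • ρ j g⁻¹ = (if g = 1 then (1:ℂ) else 0) • ρ j g⁻¹
        - ∑ i, ((d i : ℂ)/N) • ((ρ i g * 1).trace • ρ j g⁻¹) := by
      intro g
      rw [hh]
      simp only []
      rw [sub_smul, Finset.sum_smul]
      congr 1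
      refine Finset.sum_congr rfl fun i _ => ?_
      rw [Matrix.mul_one, mul_smul]
    rw [Finset.sum_congr rfl fun g _ => split g, Finset.sum_sub_distrib]
    have h1 : ∑ g : G, (if g = 1 then (1:ℂ) else 0) • ρ j g⁻¹ = 1 := by
      rw [Finset.sum_eq_single 1 (fun g _ hg => by rw [if_neg hg, zero_smul])
        (by simp)]
      simp
    have h2 : ∑ g : G, ∑ i, ((d i:ℂ)/N) • ((ρ i g * 1).trace • ρ j g⁻¹) = 1 := by
      rw [Finset.sum_comm]
      have inner : ∀ i, ∑ g : G, ((d i:ℂ)/N) • ((ρ i g * 1).trace • ρ j g⁻¹)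
          = if i = j then (1 : Matrix (Fin (d j)) (Fin (d j)) ℂ) else 0 := by
        intro i
        rw [← Finset.smul_sum]
        by_cases hij : i = j
        · subst hij
          rw [trace_sum_same (ρ i) (hirr i) 1, if_pos rfl, smul_smul]
          have hd : ((d i : ℂ)) ≠ 0 := Nat.cast_ne_zero.mpr (hirr i).1.ne'
          have hNne : N ≠ 0 := by
            rw [hN]; exact Nat.cast_ne_zero.mpr Fintype.card_ne_zero
          rw [div_mul_div_comm, mul_comm, div_self (by exact mul_ne_zero hNne hd), one_smul]
        · rw [trace_sum_cross (ρ i) (ρ j) (hineq i j hij) 1, smul_zero, if_neg hij]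
      rw [Finset.sum_congr rfl fun i _ => inner i]
      simp
    rw [h1, h2, sub_self]
  have h0 := completeness d ρ hcomplete h hhat
  have ht := congrFun h0 t
  rw [hh] at ht
  simp only [Pi.zero_apply] at ht
  exact (sub_eq_zero.mp ht).symm

end lemmas

/-- Fourier inversion formula on a finite group: for a complete family of pairwise
inequivalent irreducible matrix representations `ρ i` of dimensions `d i`,
`f(s) = ∑_ρ (d_ρ/|G|) ∑_g f(g) tr(ρ(s) ρ(g)⁻¹)`. -/
theorem fourier_inversion
    {G : Type*} [Group G] [Fintype G]
    {ι : Type*} [Fintype ι] (d : ι → ℕ)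
    (ρ : ∀ i, G →* Matrix (Fin (d i)) (Fin (d i)) ℂ)
    (hirr : ∀ i, IsIrredMatRep (ρ i))
    (hineq : ∀ i j, i ≠ j → ∀ U : Matrix (Fin (d i)) (Fin (d j)) ℂ,
      (∀ g, ρ i g * U = U * ρ j g) → U = 0)
    (hcomplete : ∀ (m : ℕ) (σ : G →* Matrix (Fin m) (Fin m) ℂ), IsIrredMatRep σ →
      ∃ i, ∃ U : Matrix (Fin (d i)) (Fin m) ℂ, U ≠ 0 ∧ ∀ g, ρ i g * U = U * σ g)
    (f : G → ℂ) (s : G) :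
    f s = ∑ i, ((d i : ℂ) / (Fintype.card G : ℂ)) *
      ∑ g : G, f g * (ρ i s * ρ i g⁻¹).trace := by
  classical
  have key : ∀ g : G, ∑ i, ((d i : ℂ) / (Fintype.card G : ℂ)) *
      (f g * (ρ i s * ρ i g⁻¹).trace) = f g * (if g = s then 1 else 0) := by
    intro g
    have step : ∀ i, ((d i : ℂ) / (Fintype.card G : ℂ)) * (f g * (ρ i s * ρ i g⁻¹).trace)
        = f g * (((d i : ℂ) / (Fintype.card G : ℂ)) * (ρ i (s * g⁻¹)).trace) := by
      intro i
      rw [_root_.map_mul]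
      ring
    rw [Finset.sum_congr rfl fun i _ => step i, ← Finset.mul_sum,
      delta_formula d ρ hirr hineq hcomplete (s * g⁻¹)]
    congr 1
    simp [mul_inv_eq_one, eq_comm]
  calc f s = ∑ g : G, f g * (if g = s then 1 else 0) := by
        rw [Finset.sum_eq_single s (fun g _ hg => by rw [if_neg hg, mul_zero]) (by simp)]
        simp
  _ = ∑ g : G, ∑ i, ((d i : ℂ) / (Fintype.card G : ℂ)) *
        (f g * (ρ i s * ρ i g⁻¹).trace) := by
        exact (Finset.sum_congr rfl fun g _ => key g).symm
  _ = ∑ i, ∑ g : G, ((d i : ℂ) / (Fintype.card G : ℂ)) *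
        (f g * (ρ i s * ρ i g⁻¹).trace) := Finset.sum_comm
  _ = ∑ i, ((d i : ℂ) / (Fintype.card G : ℂ)) *
        ∑ g : G, f g * (ρ i s * ρ i g⁻¹).trace := by
        exact Finset.sum_congr rfl fun i _ => (Finset.mul_sum _ _ _).symm
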